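/- arXiv:1212.3176 — 6 statements merged into one kernel-verified Lean document; each statement's English description precedes it below -/
import Mathlib

section
/- Let S be a compact Hausdorff space with an associative operation * such that each right translation r_q(p) = p * q is continuous, and let I be a minimal nonempty closed left ideal of S. Then I contains an idempotent p₀ such that q * p₀ = q for all q ∈ I. -/
/-!
Being compact and a subsemigroup, `I` contains an idempotent `e` (Ellis–Numakura). The points
of `I` fixed by right multiplication with `e` form a closed left ideal containing `e`, so by
minimality they are all of `I`.
-/

/-- A minimal nonempty closed left ideal of a compact Hausdorff right-topological
semigroup contains an idempotent which is a right identity on the ideal. -/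
theorem stmt_4 {S : Type*} [TopologicalSpace S] [CompactSpace S] [T2Space S]
    (mul : S → S → S)
    (assoc : ∀ a b c : S, mul (mul a b) c = mul a (mul b c))
    (rcont : ∀ q : S, Continuous fun p : S => mul p q)
    (I : Set S) (hne : I.Nonempty) (hcl : IsClosed I)
    (hideal : ∀ (p : S), ∀ q ∈ I, mul p q ∈ I)
    (hmin : ∀ L ⊆ I, L.Nonempty → IsClosed L → (∀ (p : S), ∀ q ∈ L, mul p q ∈ L) → L = I) :
    ∃ p₀ ∈ I, mul p₀ p₀ = p₀ ∧ ∀ q ∈ I, mul q p₀ = q := by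
  let : Semigroup S := { mul, mul_assoc := assoc }
  obtain ⟨e, heI, he⟩ := exists_idempotent_in_compact_subsemigroup rcont I hne hcl.isCompact
    fun p _ q hq => hideal p q hq
  have hfixed_closed : IsClosed {q ∈ I | mul q e = q} :=
    hcl.inter (isClosed_eq (rcont e) continuous_id)
  have hfixed_ideal : ∀ p, ∀ q ∈ {q ∈ I | mul q e = q}, mul p q ∈ {q ∈ I | mul q e = q} :=
    fun p q ⟨hqI, hq⟩ => ⟨hideal p q hqI, by rw [assoc, hq]⟩
  have hfixed : {q ∈ I | mul q e = q} = I :=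
    hmin _ (fun _ hq => hq.1) ⟨e, heI, he⟩ hfixed_closed hfixed_ideal
  refine ⟨e, heI, he, fun q hq => ?_⟩
  rw [← hfixed] at hq
  exact hq.2
end

section
/- Let S be a compact Hausdorff space with associative operation * with continuous right translations, I a minimal closed left ideal of S containing an idempotent p₀ with q * p₀ = q for all q ∈ I. Then for every t ∈ I there exists s ∈ I with s * t = p₀, and consequently every map of the form p ↦ p * t restricted to I is a bijection of I onto I. -/
/-!
For `u ∈ I`, the set `I * u` is the continuous image of the compact set `I`, hence closed, and it
is a left ideal inside `I`; by minimality `I * u = I`. Taking `u = t` gives `s ∈ I` with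
`s * t = p₀`, and taking `u = t * s` shows that every `a ∈ I` has the form `q * (t * s)`, so
`a * (t * s) = q * t * p₀ * s = a`. Thus `p ↦ p * s` undoes `p ↦ p * t` on `I`.
-/

section MinimalLeftIdeal

variable {S : Type*} {mul : S → S → S}

theorem image_mul_right_eq_of_minimal [TopologicalSpace S] [CompactSpace S] [T2Space S]
    (assoc : ∀ a b c : S, mul (mul a b) c = mul a (mul b c))
    (rcont : ∀ q : S, Continuous fun p : S => mul p q)
    {I : Set S} (hcl : IsClosed I) (hideal : ∀ (p : S), ∀ q ∈ I, mul p q ∈ I)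
    (hmin : ∀ L ⊆ I, L.Nonempty → IsClosed L → (∀ (p : S), ∀ q ∈ L, mul p q ∈ L) → L = I)
    {u : S} (hu : u ∈ I) :
    (fun p : S => mul p u) '' I = I := by
  apply hmin
  · rintro _ ⟨p, -, rfl⟩
    exact hideal p u hu
  · exact (Set.nonempty_of_mem hu).image _
  · exact (hcl.isCompact.image (rcont u)).isClosed
  · rintro p _ ⟨q, hq, rfl⟩
    exact ⟨mul p q, hideal p q hq, assoc p q u⟩

theorem injOn_mul_right_of_mul_eq (assoc : ∀ a b c : S, mul (mul a b) c = mul a (mul b c))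
    {I : Set S} {s t e : S} (hst : mul s t = e) (hte : mul t e = t)
    (hI : ∀ a ∈ I, ∃ q, mul q (mul t s) = a) :
    Set.InjOn (fun p : S => mul p t) I := by
  have hright_id : ∀ a ∈ I, mul a (mul t s) = a := by
    intro a ha
    obtain ⟨q, rfl⟩ := hI a ha
    rw [assoc, ← assoc (mul t s), assoc t s t, hst, hte]
  intro a ha b hb hab
  have h : mul (mul a t) s = mul (mul b t) s := congrArg (mul · s) hab
  rwa [assoc, assoc, hright_id a ha, hright_id b hb] at h

end MinimalLeftIdeal

theorem stmt_5_general {S : Type*} [TopologicalSpace S] [CompactSpace S] [T2Space S]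
    (mul : S → S → S)
    (assoc : ∀ a b c : S, mul (mul a b) c = mul a (mul b c))
    (rcont : ∀ q : S, Continuous fun p : S => mul p q)
    (I : Set S) (hcl : IsClosed I)
    (hideal : ∀ (p : S), ∀ q ∈ I, mul p q ∈ I)
    (hmin : ∀ L ⊆ I, L.Nonempty → IsClosed L → (∀ (p : S), ∀ q ∈ L, mul p q ∈ L) → L = I)
    (p₀ : S) (hp₀ : p₀ ∈ I)
    (hrid : ∀ q ∈ I, mul q p₀ = q) :
    ∀ t ∈ I, (∃ s ∈ I, mul s t = p₀) ∧ Set.BijOn (fun p : S => mul p t) I I := by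
  have himage := fun u (hu : u ∈ I) ↦
    image_mul_right_eq_of_minimal assoc rcont hcl hideal hmin hu
  intro t ht
  obtain ⟨s, hs, hst⟩ : p₀ ∈ (fun p : S => mul p t) '' I := (himage t ht).symm ▸ hp₀
  have hts : ∀ a ∈ I, ∃ q, mul q (mul t s) = a := fun a ha ↦ by
    obtain ⟨q, -, hq⟩ := (himage _ (hideal t s hs)).symm ▸ ha
    exact ⟨q, hq⟩
  exact ⟨⟨s, hs, hst⟩, fun p _ ↦ hideal p t ht,
    injOn_mul_right_of_mul_eq assoc hst (hrid t ht) hts, (himage t ht).ge⟩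

/-- In a minimal nonempty closed left ideal `I` with an idempotent `p₀` acting as right
identity on `I`: every `t ∈ I` has `s ∈ I` with `s * t = p₀`, and `p ↦ p * t` is a
bijection of `I` onto `I`. -/
theorem stmt_5 {S : Type*} [TopologicalSpace S] [CompactSpace S] [T2Space S]
    (mul : S → S → S)
    (assoc : ∀ a b c : S, mul (mul a b) c = mul a (mul b c))
    (rcont : ∀ q : S, Continuous fun p : S => mul p q)
    (I : Set S) (hne : I.Nonempty) (hcl : IsClosed I)
    (hideal : ∀ (p : S), ∀ q ∈ I, mul p q ∈ I)
    (hmin : ∀ L ⊆ I, L.Nonempty → IsClosed L → (∀ (p : S), ∀ q ∈ L, mul p q ∈ L) → L = I)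
    (p₀ : S) (hp₀ : p₀ ∈ I) (hidem : mul p₀ p₀ = p₀)
    (hrid : ∀ q ∈ I, mul q p₀ = q) :
    ∀ t ∈ I, (∃ s ∈ I, mul s t = p₀) ∧ Set.BijOn (fun p : S => mul p t) I I :=
  stmt_5_general mul assoc rcont I hcl hideal hmin p₀ hp₀ hrid
end

section
/- Let G be a group, B a G-invariant Boolean algebra of subsets of G, S the Stone space of B with its G-action by left translation. Suppose that every minimal closed G-invariant subset of S is a singleton. Then for every Y ∈ B that (as a clopen subset of S) meets some minimal closed G-invariant subset of S, we have Y Y⁻¹ = G. -/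
/-- The left translate `gY` of a subset of a group. -/
def LTrans {G : Type*} [Group G] (g : G) (Y : Set G) : Set G := (g * ·) '' Y

/-- `B` is a Boolean algebra of subsets of `G` closed under left translations. -/
def IsInvBoolAlg {G : Type*} [Group G] (B : Set (Set G)) : Prop :=
  Set.univ ∈ B ∧ (∀ Y ∈ B, Yᶜ ∈ B) ∧ (∀ Y ∈ B, ∀ Z ∈ B, Y ∩ Z ∈ B) ∧
    ∀ (g : G), ∀ Y ∈ B, LTrans g Y ∈ B

/-- `p` is an ultrafilter on the Boolean algebra `B` of subsets. -/
def IsUltraOn {α : Type*} (B p : Set (Set α)) : Prop :=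
  p ⊆ B ∧ Set.univ ∈ p ∧ ∅ ∉ p ∧ (∀ Y ∈ p, ∀ Z ∈ p, Y ∩ Z ∈ p) ∧
    (∀ Y ∈ p, ∀ Z ∈ B, Y ⊆ Z → Z ∈ p) ∧ ∀ Y ∈ B, Y ∈ p ∨ Yᶜ ∈ p

/-- `Y` is left generic: finitely many left translates of `Y` cover `G`. -/
def IsLeftGeneric {G : Type*} [Group G] (Y : Set G) : Prop :=
  ∃ F : Finset G, ⋃ g ∈ F, LTrans g Y = Set.univ

/-- The set `Y · Y⁻¹ = {a b⁻¹ : a, b ∈ Y}`. -/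
def MulInvSet {G : Type*} [Group G] (Y : Set G) : Set G :=
  {x | ∃ a ∈ Y, ∃ b ∈ Y, x = a * b⁻¹}

/-- The Stone space of the Boolean algebra `B`: the set of ultrafilters on `B`. -/
abbrev StoneS {α : Type*} (B : Set (Set α)) : Type _ := {p : Set (Set α) // IsUltraOn B p}

/-- The Stone topology, generated by the basic (cl)open sets `{p : Y ∈ p}`, `Y ∈ B`. -/
instance stoneTop {α : Type*} (B : Set (Set α)) : TopologicalSpace (StoneS B) :=
  TopologicalSpace.generateFrom {U | ∃ Y ∈ B, U = {p : StoneS B | Y ∈ p.1}}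

/-- The translation action of `G` on ultrafilters: `Y ∈ g·p ↔ g⁻¹Y ∈ p`. -/
def actUF {G : Type*} [Group G] (g : G) (p : Set (Set G)) : Set (Set G) :=
  {Y | LTrans g⁻¹ Y ∈ p}

/-- `M` is a `G`-subflow of the Stone space: nonempty, closed and `G`-invariant. -/
def IsSubflow {G : Type*} [Group G] (B : Set (Set G)) (M : Set (StoneS B)) : Prop :=
  M.Nonempty ∧ IsClosed M ∧ ∀ (g : G), ∀ q ∈ M, ∃ q' ∈ M, q'.1 = actUF g q.1

/-- `M` is a minimal `G`-subflow of the Stone space. -/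
def IsMinSubflow {G : Type*} [Group G] (B : Set (Set G)) (M : Set (StoneS B)) : Prop :=
  IsSubflow B M ∧ ∀ M' ⊆ M, IsSubflow B M' → M' = M

/-! A minimal subflow that is a singleton `{p}` consists of a `G`-fixed ultrafilter. If `Y ∈ p`,
then every translate `xY` lies in `p` as well, so `Y ∩ xY ∈ p` is nonempty; a point `a = xb` of it
with `a, b ∈ Y` exhibits `x = ab⁻¹ ∈ YY⁻¹`. -/

section

variable {G : Type*} [Group G]

theorem LTrans_inv_LTrans (g : G) (Y : Set G) : LTrans g⁻¹ (LTrans g Y) = Y := by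
  simp only [LTrans, Set.image_image, inv_mul_cancel_left, Set.image_id']

theorem mulInvSet_eq_univ_of_inter_LTrans_nonempty {Y : Set G}
    (h : ∀ x : G, (Y ∩ LTrans x Y).Nonempty) : MulInvSet Y = Set.univ := by
  refine Set.eq_univ_of_forall fun x => ?_
  obtain ⟨a, haY, b, hbY, rfl⟩ := h x
  exact ⟨x * b, haY, b, hbY, by group⟩

theorem IsUltraOn.nonempty_of_mem {α : Type*} {B p : Set (Set α)} (hp : IsUltraOn B p)
    {Y : Set α} (hY : Y ∈ p) : Y.Nonempty :=
  Set.nonempty_iff_ne_empty.2 fun h => hp.2.2.1 (h ▸ hY)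

theorem actUF_eq_of_isSubflow_singleton {B : Set (Set G)} {p : StoneS B}
    (hp : IsSubflow B {p}) (g : G) : actUF g p.1 = p.1 := by
  obtain ⟨q, rfl, hq⟩ := hp.2.2 g p rfl
  exact hq.symm

theorem LTrans_mem_of_forall_actUF_eq {p : Set (Set G)} (hfix : ∀ g : G, actUF g p = p)
    {Y : Set G} (hY : Y ∈ p) (g : G) : LTrans g Y ∈ p := by
  rw [← hfix g]
  show LTrans g⁻¹ (LTrans g Y) ∈ p
  rwa [LTrans_inv_LTrans]

theorem IsUltraOn.mulInvSet_eq_univ_of_forall_actUF_eq {B p : Set (Set G)}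
    (hp : IsUltraOn B p) (hfix : ∀ g : G, actUF g p = p) {Y : Set G} (hY : Y ∈ p) :
    MulInvSet Y = Set.univ :=
  mulInvSet_eq_univ_of_inter_LTrans_nonempty fun x =>
    hp.nonempty_of_mem (hp.2.2.2.1 Y hY _ (LTrans_mem_of_forall_actUF_eq hfix hY x))

end

theorem stmt_9_general {G : Type*} [Group G] (B : Set (Set G))
    (hsing : ∀ M : Set (StoneS B), IsMinSubflow B M → ∃ p, M = {p}) :
    ∀ Y ∈ B, ∀ M : Set (StoneS B), IsMinSubflow B M →
      (M ∩ {p : StoneS B | Y ∈ p.1}).Nonempty → MulInvSet Y = Set.univ := by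
  intro Y _ M hM hmeet
  obtain ⟨p, rfl⟩ := hsing M hM
  obtain ⟨q, rfl, hYq⟩ := hmeet
  exact q.2.mulInvSet_eq_univ_of_forall_actUF_eq (actUF_eq_of_isSubflow_singleton hM.1) hYq

/-- If every minimal closed `G`-invariant subset of the Stone space of `B` is a singleton,
then every `Y ∈ B` which (as a clopen set) meets some minimal subflow satisfies
`Y Y⁻¹ = G`. -/
theorem stmt_9 {G : Type*} [Group G] (B : Set (Set G)) (hB : IsInvBoolAlg B)
    (hsing : ∀ M : Set (StoneS B), IsMinSubflow B M → ∃ p, M = {p}) :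
    ∀ Y ∈ B, ∀ M : Set (StoneS B), IsMinSubflow B M →
      (M ∩ {p : StoneS B | Y ∈ p.1}).Nonempty → MulInvSet Y = Set.univ :=
  stmt_9_general B hsing
end

section
/- In a compact Hausdorff topological group H, for any two downward-directed families (A_i)_{i∈I} and (B_j)_{j∈J} of nonempty closed subsets, ⋂_{i,j} closure(A_i · B_j) = (⋂_i A_i) · (⋂_j B_j). -/
open Pointwise Set

/-! A point `x` of `⋂ i j, Aᵢ * Bⱼ` has, for every `(i, j)`, a factorisation `x = a * b` with
`(a, b)` in the compact set `Aᵢ ×ˢ Bⱼ`. These fibres form a directed family of nonempty compact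
sets, so they have a common point, which is a factorisation of `x` through `⋂ Aᵢ` and `⋂ Bⱼ`. -/

theorem Continuous.image_iInter_of_directed {X Y ι : Type*} [TopologicalSpace X]
    [TopologicalSpace Y] [T1Space Y] [Nonempty ι] {f : X → Y} (hf : Continuous f)
    (t : ι → Set X) (htd : Directed (· ⊇ ·) t) (htc : ∀ i, IsCompact (t i))
    (htcl : ∀ i, IsClosed (t i)) :
    f '' ⋂ i, t i = ⋂ i, f '' t i := by
  refine (image_iInter_subset t f).antisymm fun y hy => ?_
  rw [mem_iInter] at hy
  have hfibre_dir : Directed (· ⊇ ·) fun i => t i ∩ f ⁻¹' {y} :=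
    Directed.mono_comp (g := (· ∩ f ⁻¹' {y})) _ (fun _ _ h => inter_subset_inter_left _ h) htd
  obtain ⟨x, hx⟩ := IsCompact.nonempty_iInter_of_directed_nonempty_isCompact_isClosed _
    hfibre_dir (fun i => by simpa [Set.Nonempty, and_comm] using hy i)
    (fun i => (htc i).inter_right (isClosed_singleton.preimage hf))
    (fun i => (htcl i).inter (isClosed_singleton.preimage hf))
  simp only [mem_iInter, mem_inter_iff, mem_preimage, mem_singleton_iff] at hx
  exact ⟨x, mem_iInter.2 fun i => (hx i).1, (hx (Classical.arbitrary ι)).2⟩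

theorem iInter_nonempty_of_directed {X ι : Type*} [TopologicalSpace X] [CompactSpace X]
    [Nonempty X] (t : ι → Set X) (htd : Directed (· ⊇ ·) t) (htn : ∀ i, (t i).Nonempty)
    (htcl : ∀ i, IsClosed (t i)) :
    (⋂ i, t i).Nonempty := by
  rcases isEmpty_or_nonempty ι with hι | hι
  · simp
  · exact IsCompact.nonempty_iInter_of_directed_nonempty_isCompact_isClosed t htd htn
      (fun i => (htcl i).isCompact) htcl

theorem iInter_iInter_mul_of_directed {M ι κ : Type*} [Mul M] [TopologicalSpace M]
    [ContinuousMul M] [T2Space M] [Nonempty ι] [Nonempty κ] (A : ι → Set M) (B : κ → Set M)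
    (hA : Directed (· ⊇ ·) A) (hB : Directed (· ⊇ ·) B) (hAc : ∀ i, IsCompact (A i))
    (hBc : ∀ j, IsCompact (B j)) :
    ⋂ i, ⋂ j, A i * B j = (⋂ i, A i) * ⋂ j, B j := by
  have hprod : (⋂ i, A i) ×ˢ (⋂ j, B j) = ⋂ p : ι × κ, A p.1 ×ˢ B p.2 := by
    ext
    simp [forall_and]
  have hdir : Directed (· ⊇ ·) fun p : ι × κ => A p.1 ×ˢ B p.2 := by
    rintro ⟨i, j⟩ ⟨i', j'⟩
    obtain ⟨k, hki, hki'⟩ := hA i i'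
    obtain ⟨l, hlj, hlj'⟩ := hB j j'
    exact ⟨(k, l), prod_mono hki hlj, prod_mono hki' hlj'⟩
  have hc (p : ι × κ) : IsCompact (A p.1 ×ˢ B p.2) := (hAc p.1).prod (hBc p.2)
  rw [← image_mul_prod, hprod, continuous_mul.image_iInter_of_directed _ hdir hc
    fun p => (hc p).isClosed]
  ext
  simp

/-- In a compact Hausdorff topological group, for downward-directed families of nonempty
closed subsets, `⋂_{i,j} closure (Aᵢ · Bⱼ) = (⋂ᵢ Aᵢ) · (⋂ⱼ Bⱼ)`. -/
theorem stmt_14 {H : Type*} [Group H] [TopologicalSpace H] [IsTopologicalGroup H]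
    [CompactSpace H] [T2Space H] {ι κ : Type*}
    (A : ι → Set H) (B : κ → Set H)
    (hAne : ∀ i, (A i).Nonempty) (hAcl : ∀ i, IsClosed (A i))
    (hBne : ∀ j, (B j).Nonempty) (hBcl : ∀ j, IsClosed (B j))
    (hAdir : ∀ i i', ∃ i'', A i'' ⊆ A i ∧ A i'' ⊆ A i')
    (hBdir : ∀ j j', ∃ j'', B j'' ⊆ B j ∧ B j'' ⊆ B j') :
    (⋂ i, ⋂ j, closure (A i * B j)) = (⋂ i, A i) * (⋂ j, B j) := by
  simp_rw [fun i j => ((hAcl i).isCompact.mul (hBcl j).isCompact).isClosed.closure_eq]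
  rcases isEmpty_or_nonempty ι with hι | hι
  · rw [iInter_of_empty, iInter_of_empty,
      univ_mul (iInter_nonempty_of_directed B hBdir hBne hBcl)]
  rcases isEmpty_or_nonempty κ with hκ | hκ
  · simp only [iInter_of_empty, iInter_univ,
      mul_univ (iInter_nonempty_of_directed A hAdir hAne hAcl)]
  exact iInter_iInter_mul_of_directed A B hAdir hBdir (fun i => (hAcl i).isCompact)
    fun j => (hBcl j).isCompact
end

section
/- Let G be a group, B a G-invariant Boolean algebra of subsets of G, S its Stone space with the translation G-action. Suppose every left generic Y ∈ B satisfies Y Y⁻¹ = G. Then every minimal nonempty closed G-invariant subset M of S is a singleton, provided that for each p ∈ M and Y ∈ B the set {h ∈ G : Y ∈ h·p} belongs to B (definability of types). -/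
section Lem
variable {G : Type*} [Group G] {B : Set (Set G)}

theorem mem_LTrans {g x : G} {Y : Set G} : x ∈ LTrans g Y ↔ g⁻¹ * x ∈ Y := by
  constructor
  · rintro ⟨y, hy, rfl⟩; simpa
  · intro h; exact ⟨g⁻¹ * x, h, by simp⟩

theorem LTrans_one (Y : Set G) : LTrans 1 Y = Y := by ext x; simp [mem_LTrans]

theorem LTrans_LTrans (g h : G) (Y : Set G) :
    LTrans g (LTrans h Y) = LTrans (g * h) Y := by
  ext x; simp [mem_LTrans, mul_inv_rev, mul_assoc]

theorem LTrans_compl (g : G) (Y : Set G) : LTrans g Yᶜ = (LTrans g Y)ᶜ := by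
  ext x; simp [mem_LTrans]

theorem LTrans_inter (g : G) (Y Z : Set G) :
    LTrans g (Y ∩ Z) = LTrans g Y ∩ LTrans g Z := by
  ext x; simp [mem_LTrans]

theorem LTrans_univ (g : G) : LTrans g (Set.univ : Set G) = Set.univ := by
  ext x; simp [mem_LTrans]

theorem LTrans_empty (g : G) : LTrans g (∅ : Set G) = ∅ := by
  ext x; simp [mem_LTrans]

theorem LTrans_mono (g : G) {Y Z : Set G} (h : Y ⊆ Z) : LTrans g Y ⊆ LTrans g Z :=
  fun _ hx => mem_LTrans.2 (h (mem_LTrans.1 hx))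

theorem mem_actUF {g : G} {p : Set (Set G)} {Y : Set G} :
    Y ∈ actUF g p ↔ LTrans g⁻¹ Y ∈ p := Iff.rfl

theorem actUF_one (p : Set (Set G)) : actUF (1 : G) p = p := by
  ext Y; simp [actUF, LTrans_one]

theorem actUF_actUF (g h : G) (p : Set (Set G)) :
    actUF g (actUF h p) = actUF (g * h) p := by
  ext Y; simp [actUF, LTrans_LTrans, mul_inv_rev]

theorem compl_notMem_ultra {p : Set (Set G)} (hp : IsUltraOn B p) {Y : Set G}
    (hY : Y ∈ p) : Yᶜ ∉ p := by
  obtain ⟨-, -, hemp, hinter, -, -⟩ := hp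
  intro h
  exact hemp (by simpa using hinter Y hY Yᶜ h)

theorem compl_mem_ultra {p : Set (Set G)} (hp : IsUltraOn B p) {Y : Set G}
    (hYB : Y ∈ B) (hY : Y ∉ p) : Yᶜ ∈ p := by
  rcases hp.2.2.2.2.2 Y hYB with h | h
  · exact absurd h hY
  · exact h

theorem isUltraOn_actUF (hB : IsInvBoolAlg B) {p : Set (Set G)} (hp : IsUltraOn B p)
    (g : G) : IsUltraOn B (actUF g p) := by
  obtain ⟨hsub, huniv, hemp, hinter, hup, hdic⟩ := hp
  refine ⟨?_, ?_, ?_, ?_, ?_, ?_⟩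
  · intro Y hY
    have : LTrans g (LTrans g⁻¹ Y) ∈ B := hB.2.2.2 g _ (hsub hY)
    simpa [LTrans_LTrans, LTrans_one] using this
  · show LTrans g⁻¹ Set.univ ∈ p
    simpa [LTrans_univ] using huniv
  · show LTrans g⁻¹ (∅ : Set G) ∉ p
    simpa [LTrans_empty] using hemp
  · intro Y hY Z hZ
    show LTrans g⁻¹ (Y ∩ Z) ∈ p
    rw [LTrans_inter]
    exact hinter _ hY _ hZ
  · intro Y hY Z hZB hYZ
    exact hup _ hY _ (hB.2.2.2 g⁻¹ Z hZB) (LTrans_mono _ hYZ)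
  · intro Y hYB
    rcases hdic _ (hB.2.2.2 g⁻¹ Y hYB) with h | h
    · exact Or.inl h
    · exact Or.inr (by rwa [mem_actUF, LTrans_compl])

theorem isOpen_basic {Y : Set G} (hY : Y ∈ B) :
    IsOpen {p : StoneS B | Y ∈ p.1} :=
  TopologicalSpace.isOpen_generateFrom_of_mem ⟨Y, hY, rfl⟩

theorem exists_basic' (hB : IsInvBoolAlg B) {O : Set (StoneS B)}
    (hO : TopologicalSpace.GenerateOpen {U | ∃ Y ∈ B, U = {p : StoneS B | Y ∈ p.1}} O) :
    ∀ r ∈ O, ∃ Y ∈ B, Y ∈ r.1 ∧ {p : StoneS B | Y ∈ p.1} ⊆ O := by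
  induction hO with
  | basic U hU =>
      obtain ⟨Y, hYB, rfl⟩ := hU
      exact fun r hr => ⟨Y, hYB, hr, le_refl _⟩
  | univ =>
      exact fun r _ => ⟨Set.univ, hB.1, r.2.2.1, fun _ _ => trivial⟩
  | inter O₁ O₂ h₁ h₂ ih₁ ih₂ =>
      intro r hr
      obtain ⟨Y₁, hY₁B, hY₁r, hs₁⟩ := ih₁ r hr.1
      obtain ⟨Y₂, hY₂B, hY₂r, hs₂⟩ := ih₂ r hr.2
      refine ⟨Y₁ ∩ Y₂, hB.2.2.1 _ hY₁B _ hY₂B, r.2.2.2.2.1 _ hY₁r _ hY₂r, ?_⟩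
      intro x hx
      exact ⟨hs₁ (x.2.2.2.2.2.1 _ hx _ hY₁B Set.inter_subset_left),
             hs₂ (x.2.2.2.2.2.1 _ hx _ hY₂B Set.inter_subset_right)⟩
  | sUnion S hS ih =>
      intro r hr
      obtain ⟨O, hOS, hrO⟩ := hr
      obtain ⟨Y, hYB, hYr, hs⟩ := ih O hOS r hrO
      exact ⟨Y, hYB, hYr, fun x hx => ⟨O, hOS, hs hx⟩⟩

theorem mem_closure_iff' (hB : IsInvBoolAlg B) {T : Set (StoneS B)} {r : StoneS B} :
    r ∈ closure T ↔ ∀ Y ∈ B, Y ∈ r.1 → ∃ t ∈ T, Y ∈ t.1 := by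
  rw [mem_closure_iff]
  constructor
  · intro h Y hYB hYr
    obtain ⟨t, htO, htT⟩ := h _ (isOpen_basic hYB) hYr
    exact ⟨t, htT, htO⟩
  · intro h O hO hrO
    obtain ⟨Y, hYB, hYr, hs⟩ := exists_basic' hB hO r hrO
    obtain ⟨t, htT, hYt⟩ := h Y hYB hYr
    exact ⟨t, hs hYt, htT⟩
end Lem

section Dyn
variable {G : Type*} [Group G] {B : Set (Set G)}





/- Ap-lemmas about the "return set" {h | W ∈ actUF h p}. -/
theorem Ap_univ {p : Set (Set G)} (hp : IsUltraOn B p) :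
    {h : G | Set.univ ∈ actUF h p} = Set.univ := by
  ext h; simp [mem_actUF, LTrans_univ, hp.2.1]

theorem Ap_empty {p : Set (Set G)} (hp : IsUltraOn B p) :
    {h : G | (∅ : Set G) ∈ actUF h p} = ∅ := by
  ext h; simp [mem_actUF, LTrans_empty, hp.2.2.1]

theorem Ap_inter (hB : IsInvBoolAlg B) {p : Set (Set G)} (hp : IsUltraOn B p)
    {W₁ W₂ : Set G} (h₁ : W₁ ∈ B) (h₂ : W₂ ∈ B) :
    {h : G | W₁ ∩ W₂ ∈ actUF h p} = {h : G | W₁ ∈ actUF h p} ∩ {h : G | W₂ ∈ actUF h p} := by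
  ext h
  have hu := isUltraOn_actUF hB hp h
  constructor
  · intro hw
    exact ⟨hu.2.2.2.2.1 _ hw _ h₁ Set.inter_subset_left,
           hu.2.2.2.2.1 _ hw _ h₂ Set.inter_subset_right⟩
  · intro ⟨hw1, hw2⟩
    exact hu.2.2.2.1 _ hw1 _ hw2

theorem Ap_compl (hB : IsInvBoolAlg B) {p : Set (Set G)} (hp : IsUltraOn B p)
    {W : Set G} (hW : W ∈ B) :
    {h : G | Wᶜ ∈ actUF h p} = {h : G | W ∈ actUF h p}ᶜ := by
  ext h
  have hu := isUltraOn_actUF hB hp h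
  constructor
  · intro hw hw'
    exact compl_notMem_ultra hu hw' hw
  · intro hw
    exact compl_mem_ultra hu hW hw

theorem Ap_mono (hB : IsInvBoolAlg B) {p : Set (Set G)} (hp : IsUltraOn B p)
    {W V : Set G} (hV : V ∈ B) (hWV : W ⊆ V) :
    {h : G | W ∈ actUF h p} ⊆ {h : G | V ∈ actUF h p} := by
  intro h hw
  exact (isUltraOn_actUF hB hp h).2.2.2.2.1 _ hw _ hV hWV

theorem Ap_LTrans {p : Set (Set G)} (g : G) (W : Set G) :
    {h : G | LTrans g W ∈ actUF h p} = LTrans g {h : G | W ∈ actUF h p} := by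
  ext h
  simp only [Set.mem_setOf_eq, mem_actUF, mem_LTrans, LTrans_LTrans, mul_inv_rev, inv_inv]

/-- The closure of the orbit of a point of a minimal subflow is the whole subflow. -/
theorem orbit_closure (hB : IsInvBoolAlg B) {M : Set (StoneS B)} (hM : IsMinSubflow B M)
    {q : StoneS B} (hq : q ∈ M) :
    closure {x : StoneS B | x ∈ M ∧ ∃ h : G, x.1 = actUF h q.1} = M := by
  set T := {x : StoneS B | x ∈ M ∧ ∃ h : G, x.1 = actUF h q.1} with hT
  have hTM : closure T ⊆ M := closure_minimal (fun x hx => hx.1) hM.1.2.1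
  apply hM.2 _ hTM
  refine ⟨⟨q, subset_closure ⟨hq, 1, (actUF_one q.1).symm⟩⟩, isClosed_closure, ?_⟩
  intro g x hx
  have hxM : x ∈ M := hTM hx
  obtain ⟨x', hx'M, hx'⟩ := hM.1.2.2 g x hxM
  refine ⟨x', ?_, hx'⟩
  rw [mem_closure_iff' hB]
  intro Y hYB hYx'
  rw [hx'] at hYx'
  have h1 : LTrans g⁻¹ Y ∈ x.1 := hYx'
  have h1B : LTrans g⁻¹ Y ∈ B := hB.2.2.2 g⁻¹ Y hYB
  obtain ⟨t, ⟨htM, h0, ht⟩, hYt⟩ := (mem_closure_iff' hB).1 hx _ h1B h1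
  obtain ⟨t', ht'M, ht'⟩ := hM.1.2.2 g t htM
  refine ⟨t', ⟨ht'M, g * h0, by rw [ht', ht, actUF_actUF]⟩, ?_⟩
  rw [ht', ht]
  show LTrans g⁻¹ Y ∈ actUF h0 q.1
  rw [← ht]
  exact hYt

theorem density (hB : IsInvBoolAlg B) {M : Set (StoneS B)} (hM : IsMinSubflow B M)
    {q s : StoneS B} (hq : q ∈ M) (hs : s ∈ M) {Y : Set G} (hY : Y ∈ B)
    (hYs : Y ∈ s.1) : ∃ h : G, Y ∈ actUF h q.1 := by
  rw [← orbit_closure hB hM hq] at hs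
  obtain ⟨t, ⟨-, h0, ht⟩, hYt⟩ := (mem_closure_iff' hB).1 hs Y hY hYs
  exact ⟨h0, ht ▸ hYt⟩
end Dyn

section Gen
variable {G : Type*} [Group G] {B : Set (Set G)}

theorem generic_return (hB : IsInvBoolAlg B) {M : Set (StoneS B)} (hM : IsMinSubflow B M)
    (hdef : ∀ p ∈ M, ∀ Y ∈ B, {h : G | Y ∈ actUF h p.1} ∈ B)
    {p : StoneS B} (hp : p ∈ M) {Z : Set G} (hZB : Z ∈ B) (hZp : Z ∈ p.1) :
    IsLeftGeneric {h : G | Z ∈ actUF h p.1} := by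
  by_contra hng
  set A := {h : G | Z ∈ actUF h p.1} with hA
  have hAB : A ∈ B := hdef p hp Z hZB
  -- finite intersection property of translates of Aᶜ
  have hFIP : ∀ T : Finset (Set G),
      (↑T : Set (Set G)) ⊆ {W : Set G | ∃ g : G, W = LTrans g Aᶜ} →
      (⋂₀ (↑T : Set (Set G))).Nonempty := by
    intro T hT
    classical
    set F : Finset G := T.attach.image (fun W => (hT W.2).choose) with hF
    have hne : ⋃ g ∈ F, LTrans g A ≠ Set.univ := fun hcov => hng ⟨F, hcov⟩
    obtain ⟨x, hx⟩ := (Set.ne_univ_iff_exists_notMem _).1 hne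
    refine ⟨x, ?_⟩
    intro W hW
    have hspec : W = LTrans (hT hW).choose Aᶜ := (hT hW).choose_spec
    have hmem : (hT hW).choose ∈ F := by
      apply Finset.mem_image.2
      exact ⟨⟨W, hW⟩, Finset.mem_attach _ _, rfl⟩
    have hxW : x ∉ LTrans (hT hW).choose A := by
      intro hxin
      exact hx (Set.mem_biUnion hmem hxin)
    rw [hspec, LTrans_compl]
    exact hxW
  obtain ⟨U, hU⟩ := Ultrafilter.exists_ultrafilter_of_finite_inter_nonempty _ hFIP
  -- the point q0 = U * p
  set q0 : Set (Set G) := {W ∈ B | {h : G | W ∈ actUF h p.1} ∈ U} with hq0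
  have hq0u : IsUltraOn B q0 := by
    refine ⟨fun W hW => hW.1, ?_, ?_, ?_, ?_, ?_⟩
    · exact ⟨hB.1, by rw [Ap_univ p.2]; exact Filter.univ_mem⟩
    · rintro ⟨-, hbad⟩
      rw [Ap_empty p.2] at hbad
      exact Filter.empty_notMem _ hbad
    · rintro W₁ ⟨h1B, h1U⟩ W₂ ⟨h2B, h2U⟩
      exact ⟨hB.2.2.1 _ h1B _ h2B,
        by rw [Ap_inter hB p.2 h1B h2B]; exact Filter.inter_mem h1U h2U⟩
    · rintro W ⟨hWB, hWU⟩ V hVB hWV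
      exact ⟨hVB, Filter.mem_of_superset hWU (Ap_mono hB p.2 hVB hWV)⟩
    · intro W hWB
      by_cases hc : {h : G | W ∈ actUF h p.1} ∈ U
      · exact Or.inl ⟨hWB, hc⟩
      · refine Or.inr ⟨hB.2.1 _ hWB, ?_⟩
        rw [Ap_compl hB p.2 hWB]
        exact (Ultrafilter.compl_mem_iff_notMem).2 hc
  set q0pt : StoneS B := ⟨q0, hq0u⟩ with hq0pt
  have hq0M : q0pt ∈ M := by
    rw [← orbit_closure hB hM hp, mem_closure_iff' hB]
    rintro W hWB ⟨-, hWU⟩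
    obtain ⟨h, hh⟩ := Ultrafilter.nonempty_of_mem hWU
    obtain ⟨t, htM, ht⟩ := hM.1.2.2 h p hp
    exact ⟨t, ⟨htM, h, ht⟩, ht ▸ hh⟩
  -- density: orbit of q0 meets the basic open set given by Z ∈ p
  obtain ⟨h, hh⟩ := density hB hM hq0M hp hZB hZp
  have h1 : LTrans h⁻¹ Z ∈ q0 := hh
  have h2 : {k : G | LTrans h⁻¹ Z ∈ actUF k p.1} ∈ U := h1.2
  rw [Ap_LTrans] at h2
  have h3 : LTrans h⁻¹ Aᶜ ∈ U := hU ⟨h⁻¹, rfl⟩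
  rw [LTrans_compl] at h3
  exact (Ultrafilter.compl_mem_iff_notMem).1 h3 h2
end Gen

section Main
variable {G : Type*} [Group G] {B : Set (Set G)}

theorem exists_sep (hB : IsInvBoolAlg B) {p r : Set (Set G)} (hp : IsUltraOn B p) (hr : IsUltraOn B r)
    (hne : r ≠ p) : ∃ Y ∈ B, Y ∈ r ∧ Y ∉ p := by
  have : ∃ W, ¬(W ∈ r ↔ W ∈ p) := by
    by_contra hc
    push_neg at hc
    exact hne (Set.ext hc)
  obtain ⟨W, hW⟩ := this
  rcases Classical.em (W ∈ r) with h1 | h1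
  · have h2 : W ∉ p := fun h => hW ⟨fun _ => h, fun _ => h1⟩
    exact ⟨W, hr.1 h1, h1, h2⟩
  · have h2 : W ∈ p := by
      by_contra h2
      exact hW ⟨fun h => absurd h h1, fun h => absurd h h2⟩
    refine ⟨Wᶜ, hB.2.1 _ (hp.1 h2), compl_mem_ultra hr (hp.1 h2) h1, ?_⟩
    exact compl_notMem_ultra hp h2
end Main



/-- If every left generic `Y ∈ B` satisfies `Y Y⁻¹ = G`, then (under definability of
types for points of `M`) every minimal nonempty closed `G`-invariant subset `M` of the
Stone space of `B` is a singleton. -/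
theorem stmt_16 {G : Type*} [Group G] (B : Set (Set G)) (hB : IsInvBoolAlg B)
    (hgen : ∀ Y ∈ B, IsLeftGeneric Y → MulInvSet Y = Set.univ)
    (M : Set (StoneS B)) (hM : IsMinSubflow B M)
    (hdef : ∀ p ∈ M, ∀ Y ∈ B, {h : G | Y ∈ actUF h p.1} ∈ B) :
    ∃ p, M = {p} := by
  obtain ⟨p, hp⟩ := hM.1.1
  -- Step A: p is a fixed point.
  have hfix : ∀ g : G, actUF g p.1 = p.1 := by
    intro g
    by_contra hne
    have hgu : IsUltraOn B (actUF g p.1) := isUltraOn_actUF hB p.2 g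
    -- find Y ∈ p with Y ∉ g·p
    obtain ⟨Y, hYB, hYp, hYgp⟩ := exists_sep hB hgu p.2 (fun h => hne h.symm)
    -- Z = Y ∩ (g⁻¹Y)ᶜ  belongs to p and is disjoint from gZ.
    set Z : Set G := Y ∩ (LTrans g⁻¹ Y)ᶜ with hZ
    have hgYB : LTrans g⁻¹ Y ∈ B := hB.2.2.2 g⁻¹ Y hYB
    have hZB : Z ∈ B := hB.2.2.1 _ hYB _ (hB.2.1 _ hgYB)
    have hZp : Z ∈ p.1 :=
      p.2.2.2.2.1 _ hYp _ (compl_mem_ultra p.2 hgYB hYgp)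
    have hdisj : Z ∩ LTrans g Z = ∅ := by
      apply Set.eq_empty_iff_forall_notMem.2
      rintro x ⟨⟨hxY, -⟩, hxgZ⟩
      rw [hZ, LTrans_inter, LTrans_compl, LTrans_LTrans] at hxgZ
      simp only [mul_inv_cancel, LTrans_one] at hxgZ
      exact hxgZ.2 hxY
    -- the return set A is generic.
    set A : Set G := {h : G | Z ∈ actUF h p.1} with hA
    have hAB : A ∈ B := hdef p hp Z hZB
    have hAgen : IsLeftGeneric A := generic_return hB hM hdef hp hZB hZp
    have hAA : MulInvSet A = Set.univ := hgen A hAB hAgen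
    have : (g⁻¹ : G) ∈ MulInvSet A := by rw [hAA]; trivial
    obtain ⟨a, ha, b, hb, hab⟩ := this
    -- a = g⁻¹ * b
    have hab' : a = g⁻¹ * b := by
      rw [hab]; group
    have h1 : LTrans b⁻¹ Z ∈ p.1 := hb
    have h2 : LTrans b⁻¹ (LTrans g Z) ∈ p.1 := by
      have := ha
      rw [hab'] at this
      have h3 : LTrans (g⁻¹ * b)⁻¹ Z ∈ p.1 := this
      rw [LTrans_LTrans]
      have : b⁻¹ * g = (g⁻¹ * b)⁻¹ := by group
      rw [this]
      exact h3
    have h4 : LTrans b⁻¹ Z ∩ LTrans b⁻¹ (LTrans g Z) ∈ p.1 :=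
      p.2.2.2.2.1 _ h1 _ h2
    rw [← LTrans_inter, hdisj, LTrans_empty] at h4
    exact p.2.2.2.1 h4
  -- Step B: {p} is a subflow, hence M = {p}.
  refine ⟨p, (hM.2 {p} (by simpa using hp) ?_).symm⟩
  refine ⟨⟨p, rfl⟩, ?_, ?_⟩
  · -- {p} is closed
    rw [← isOpen_compl_iff]
    have : ({p} : Set (StoneS B))ᶜ =
        ⋃₀ {U | ∃ Y, Y ∈ B ∧ Y ∉ p.1 ∧ U = {x : StoneS B | Y ∈ x.1}} := by
      ext x
      simp only [Set.mem_compl_iff, Set.mem_singleton_iff, Set.mem_sUnion]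
      constructor
      · intro hx
        obtain ⟨Y, hYB, hYx, hYp⟩ := exists_sep hB p.2 x.2 (fun h => hx (Subtype.ext h))
        exact ⟨_, ⟨Y, hYB, hYp, rfl⟩, hYx⟩
      · rintro ⟨U, ⟨Y, hYB, hYp, rfl⟩, hxU⟩ rfl
        exact hYp hxU
    rw [this]
    apply isOpen_sUnion
    rintro U ⟨Y, hYB, -, rfl⟩
    exact isOpen_basic hYB
  · intro g q hq
    rw [Set.mem_singleton_iff] at hq
    refine ⟨p, rfl, ?_⟩
    rw [hq]
    exact (hfix g).symm
end

section
/- Let S be a compact Hausdorff right-topological semigroup (associative * with each right translation p ↦ p * q continuous) with a distinguished element 1 satisfying 1 * q = q for all q. Suppose for each q ∈ S, r_q : S → S defined by r_q(p) = p * q is the unique continuous map from S to S commuting with all left translations by elements of a dense subgroup G ⊆ S and sending 1 to q. Then for any two minimal nonempty closed left ideals I, J of S, there is a bijection between I and J of the form p ↦ p * t. -/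
/-!
Pick an idempotent `e` in `I` (Ellis–Numakura); it is a right identity on `I`, and `e * I` is a
group with identity `e`, since `S * x = I` for every `x ∈ I` yields left inverses, and an element
with a left inverse that itself has a left inverse is invertible. For any `t`, the element
`e * t * e` lies in this group, so multiplying `p * t * e = p * (e * t * e)` on the right by its
inverse recovers `p ∈ I`: right translation by `t` is injective on `I`. Taking `t ∈ J`, the image
`I * t` is a nonempty closed left ideal inside `J`, hence equal to `J` by minimality.
-/

namespace RightTopologicalSemigroup

variable {M : Type*} [Semigroup M]

def IsLeftIdeal (L : Set M) : Prop := ∀ p, ∀ q ∈ L, p * q ∈ L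

variable [TopologicalSpace M] in
def IsMinimalAmongClosedLeftIdeals (J : Set M) : Prop :=
  ∀ L ⊆ J, L.Nonempty → IsClosed L → IsLeftIdeal L → L = J

theorem IsLeftIdeal.image_mul_right {L : Set M} (hL : IsLeftIdeal L) (t : M) :
    IsLeftIdeal ((· * t) '' L) := by
  rintro p _ ⟨q, hq, rfl⟩
  exact ⟨p * q, hL p q hq, mul_assoc p q t⟩

variable [TopologicalSpace M] [CompactSpace M] [T2Space M] (hcont : ∀ r : M, Continuous (· * r))
include hcont

theorem image_mul_right_eq {J L : Set M} (hJid : IsLeftIdeal J)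
    (hJmin : IsMinimalAmongClosedLeftIdeals J) (hLne : L.Nonempty) (hLcl : IsClosed L)
    (hLid : IsLeftIdeal L) {t : M} (ht : t ∈ J) : (· * t) '' L = J :=
  hJmin _ (Set.image_subset_iff.2 fun q _ => hJid q t ht) (hLne.image _)
    (hLcl.isCompact.image (hcont t)).isClosed (hLid.image_mul_right t)

variable {I : Set M} (hIid : IsLeftIdeal I) (hImin : IsMinimalAmongClosedLeftIdeals I)
include hIid hImin

theorem exists_mul_eq_of_mem {x : M} (hx : x ∈ I) (y : M) (hy : y ∈ I) : ∃ p, p * x = y := by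
  have : Nonempty M := ⟨x⟩
  have hrange : Set.range (· * x) = I := by
    rw [← Set.image_univ]
    exact image_mul_right_eq hcont hIid hImin Set.univ_nonempty isClosed_univ
      (fun _ _ _ => trivial) hx
  rw [← hrange] at hy
  exact hy

theorem mul_idempotent_eq_self {e : M} (he : e ∈ I) (hee : IsIdempotentElem e) {p : M}
    (hp : p ∈ I) : p * e = p := by
  obtain ⟨q, hq⟩ := exists_mul_eq_of_mem hcont hIid hImin he p hp
  rw [← hq, mul_assoc, hee.eq]

theorem exists_mul_eq_idempotent {e : M} (he : e ∈ I) (hee : IsIdempotentElem e) {x : M}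
    (hx : x ∈ I) (hex : e * x = x) : ∃ v, x * v = e := by
  obtain ⟨p, hp⟩ := exists_mul_eq_of_mem hcont hIid hImin hx e he
  set v := e * p * e
  have hvx : v * x = e := calc
    v * x = e * p * (e * x) := by simp only [v, mul_assoc]
    _ = e := by rw [hex, mul_assoc, hp, hee.eq]
  have hev : e * v = v := by simp only [v, ← mul_assoc, hee.eq]
  obtain ⟨w, hw⟩ : ∃ w, w * v = e :=
    exists_mul_eq_of_mem hcont hIid hImin (hIid _ _ he) e he
  have hxw : x = w * e := calc
    x = w * v * x := by rw [hw, hex]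
    _ = w * e := by rw [mul_assoc, hvx]
  exact ⟨v, by rw [hxw, mul_assoc, hev, hw]⟩

theorem injOn_mul_right (hIne : I.Nonempty) (hIcl : IsClosed I) (t : M) :
    Set.InjOn (· * t) I := by
  obtain ⟨e, he, hee⟩ : ∃ e ∈ I, IsIdempotentElem e :=
    exists_idempotent_in_compact_subsemigroup hcont I hIne hIcl.isCompact
      fun p _ q hq => hIid p q hq
  obtain ⟨v, hv⟩ := exists_mul_eq_idempotent hcont hIid hImin he hee (hIid _ _ he : e * t * e ∈ I)
    (by simp only [← mul_assoc, hee.eq])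
  have hcancel : ∀ p ∈ I, p * t * e * v = p := fun p hp => by
    have hpe := mul_idempotent_eq_self hcont hIid hImin he hee hp
    calc p * t * e * v = p * (e * t * e * v) := by nth_rw 1 [← hpe]; simp only [mul_assoc]
      _ = p := by rw [hv, hpe]
  intro p hp q hq hpq
  rw [← hcancel p hp, ← hcancel q hq]
  exact congrArg (· * e * v) hpq

theorem bijOn_mul_right (hIne : I.Nonempty) (hIcl : IsClosed I) {J : Set M}
    (hJid : IsLeftIdeal J) (hJmin : IsMinimalAmongClosedLeftIdeals J) {t : M} (ht : t ∈ J) :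
    Set.BijOn (· * t) I J :=
  ⟨fun p _ => hJid p t ht, injOn_mul_right hcont hIid hImin hIne hIcl t,
    (image_mul_right_eq hcont hJid hJmin hIne hIcl hIid ht).superset⟩

end RightTopologicalSemigroup

theorem stmt_19_general {S : Type*} [TopologicalSpace S] [CompactSpace S] [T2Space S]
    (mul : S → S → S)
    (assoc : ∀ a b c : S, mul (mul a b) c = mul a (mul b c))
    (rcont : ∀ q : S, Continuous fun p : S => mul p q)
    (I J : Set S)
    (hIne : I.Nonempty) (hIcl : IsClosed I) (hIid : ∀ (p : S), ∀ q ∈ I, mul p q ∈ I)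
    (hImin : ∀ L ⊆ I, L.Nonempty → IsClosed L → (∀ (p : S), ∀ q ∈ L, mul p q ∈ L) → L = I)
    (hJne : J.Nonempty) (hJid : ∀ (p : S), ∀ q ∈ J, mul p q ∈ J)
    (hJmin : ∀ L ⊆ J, L.Nonempty → IsClosed L → (∀ (p : S), ∀ q ∈ L, mul p q ∈ L) → L = J) :
    ∃ t : S, Set.BijOn (fun p : S => mul p t) I J := by
  let : Semigroup S := { mul := mul, mul_assoc := assoc }
  obtain ⟨t, ht⟩ := hJne
  exact ⟨t, RightTopologicalSemigroup.bijOn_mul_right rcont hIid hImin hIne hIcl hJid hJmin ht⟩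

/-- Let `S` be a compact Hausdorff right-topological semigroup with a left identity `1`,
containing a subgroup `G` acting by left translations (which are homeomorphisms) with
`G * 1` dense, such that for each `q` the right translation `r_q : p ↦ p * q` is the
unique continuous map commuting with all left translations by elements of `G` and
sending `1` to `q`. Then any two minimal nonempty closed left ideals `I`, `J` of `S`
are in bijection via a map of the form `p ↦ p * t`. -/
theorem stmt_19 {S : Type*} [TopologicalSpace S] [CompactSpace S] [T2Space S]
    (mul : S → S → S)
    (assoc : ∀ a b c : S, mul (mul a b) c = mul a (mul b c))
    (rcont : ∀ q : S, Continuous fun p : S => mul p q)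
    (one : S) (hone : ∀ q : S, mul one q = q)
    (Gs : Set S) (hone_mem : one ∈ Gs)
    (hmul_mem : ∀ a ∈ Gs, ∀ b ∈ Gs, mul a b ∈ Gs)
    (hinv_mem : ∀ a ∈ Gs, ∃ b ∈ Gs, mul a b = one ∧ mul b a = one)
    (hhomeo : ∀ g ∈ Gs, IsHomeomorph (fun p : S => mul g p))
    (hdense : Dense ((fun g : S => mul g one) '' Gs))
    (huniq : ∀ q : S, ∀ F : S → S, Continuous F →
      (∀ g ∈ Gs, ∀ p : S, F (mul g p) = mul g (F p)) → F one = q →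
      F = fun p : S => mul p q)
    (I J : Set S)
    (hIne : I.Nonempty) (hIcl : IsClosed I) (hIid : ∀ (p : S), ∀ q ∈ I, mul p q ∈ I)
    (hImin : ∀ L ⊆ I, L.Nonempty → IsClosed L → (∀ (p : S), ∀ q ∈ L, mul p q ∈ L) → L = I)
    (hJne : J.Nonempty) (hJcl : IsClosed J) (hJid : ∀ (p : S), ∀ q ∈ J, mul p q ∈ J)
    (hJmin : ∀ L ⊆ J, L.Nonempty → IsClosed L → (∀ (p : S), ∀ q ∈ L, mul p q ∈ L) → L = J) :
    ∃ t : S, Set.BijOn (fun p : S => mul p t) I J :=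
  stmt_19_general mul assoc rcont I J hIne hIcl hIid hImin hJne hJid hJmin
end
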